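/- arXiv:2103.03693 — 4 statements merged into one kernel-verified Lean document; each statement's English description precedes it below -/
import Mathlib

section
/- For every shape transformation φ of ℝ^n and every smooth metric g of Kundt shape on ℝ^n, the pullback φ*g is again a smooth metric of Kundt shape; that is, shape transformations preserve the class of Kundt-shaped metrics (Theorem 1, forward direction). -/
open Matrix

noncomputable section

/-- We work on `ℝ^(n+3)` (so the dimension is an arbitrary integer `≥ 3`), with coordinates
`(u, x^1, …, x^{n+1}, v)`. Index of the coordinate `u`. -/
def uIdx (n : ℕ) : Fin (n + 3) := 0

/-- Index of the coordinate `v`. -/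
def vIdx (n : ℕ) : Fin (n + 3) := Fin.last (n + 2)

/-- Index of the coordinate `x^i`. -/
def xIdx (n : ℕ) (i : Fin (n + 1)) : Fin (n + 3) := ⟨i.val + 1, by omega⟩

/-- Partial derivative of a scalar function `f` on `ℝ^(n+3)` in the `j`-th coordinate at `p`. -/
def partialDeriv' (n : ℕ) (f : (Fin (n + 3) → ℝ) → ℝ) (j : Fin (n + 3))
    (p : Fin (n + 3) → ℝ) : ℝ :=
  deriv (fun t => f (Function.update p j t)) (p j)

/-- A smooth metric of Kundt shape on `ℝ^(n+3)`. -/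
structure IsKundtShape (n : ℕ)
    (g : (Fin (n + 3) → ℝ) → Matrix (Fin (n + 3)) (Fin (n + 3)) ℝ) : Prop where
  smooth : ∀ i j, ContDiff ℝ (⊤ : ℕ∞) fun p => g p i j
  symm : ∀ p, (g p).IsSymm
  vv : ∀ p, g p (vIdx n) (vIdx n) = 0
  xv : ∀ p i, g p (xIdx n i) (vIdx n) = 0
  uv : ∀ p, g p (uIdx n) (vIdx n) = 1
  posDef : ∀ p, (Matrix.of fun i j : Fin (n + 1) => g p (xIdx n i) (xIdx n j)).PosDef
  vIndep : ∀ p i j, partialDeriv' n (fun q => g q (xIdx n i) (xIdx n j)) (vIdx n) p = 0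

/-- A shape transformation `φ(u,x,v) = (C(u), A(u,x), v/C'(u) + B(u,x))`. -/
def IsShapeTransform (n : ℕ) (φ : (Fin (n + 3) → ℝ) → Fin (n + 3) → ℝ) : Prop :=
  ∃ (C : ℝ → ℝ) (A : ℝ → (Fin (n + 1) → ℝ) → Fin (n + 1) → ℝ) (B : ℝ → (Fin (n + 1) → ℝ) → ℝ),
    ContDiff ℝ (⊤ : ℕ∞) C ∧
    (∀ i, ContDiff ℝ (⊤ : ℕ∞) fun q : ℝ × (Fin (n + 1) → ℝ) => A q.1 q.2 i) ∧
    ContDiff ℝ (⊤ : ℕ∞) (fun q : ℝ × (Fin (n + 1) → ℝ) => B q.1 q.2) ∧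
    (∀ u, deriv C u ≠ 0) ∧
    (∀ u x, IsUnit (Matrix.of fun i j : Fin (n + 1) =>
        deriv (fun t => A u (Function.update x j t) i) (x j))) ∧
    (∀ p, φ p (uIdx n) = C (p (uIdx n))) ∧
    (∀ p i, φ p (xIdx n i) = A (p (uIdx n)) (fun j => p (xIdx n j)) i) ∧
    (∀ p, φ p (vIdx n) =
      p (vIdx n) / deriv C (p (uIdx n)) + B (p (uIdx n)) (fun j => p (xIdx n j)))

/-- The Jacobian matrix `Dφ_p` of `φ` at `p`. -/
def jacobianMatrix (n : ℕ) (φ : (Fin (n + 3) → ℝ) → Fin (n + 3) → ℝ)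
    (p : Fin (n + 3) → ℝ) : Matrix (Fin (n + 3)) (Fin (n + 3)) ℝ :=
  Matrix.of fun i j => partialDeriv' n (fun q => φ q i) j p

/-- The pullback metric `(φ*g)(p) = (Dφ_p)ᵀ · g(φ(p)) · Dφ_p`. -/
def pullbackMetric (n : ℕ) (φ : (Fin (n + 3) → ℝ) → Fin (n + 3) → ℝ)
    (g : (Fin (n + 3) → ℝ) → Matrix (Fin (n + 3)) (Fin (n + 3)) ℝ)
    (p : Fin (n + 3) → ℝ) : Matrix (Fin (n + 3)) (Fin (n + 3)) ℝ :=
  (jacobianMatrix n φ p)ᵀ * g (φ p) * jacobianMatrix n φ p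

/-! The Jacobian `J` of a shape transformation has `u`-row `C'(u) e_u`, `v`-column `e_v / C'(u)`
and `x`-block `∂A/∂x`. The `v`-column of a Kundt metric `g` is `e_u`, so the `v`-column of
`Jᵀ g(φ) J` is `J_{u·} / C'(u) = e_u`; and since the `u`-row of `J` and the `v`-row of `g` vanish on
the `x`-columns, the `x`-block of `Jᵀ g(φ) J` is `(∂A/∂x)ᵀ g_xx(φ) (∂A/∂x)`, positive definite
because `∂A/∂x` is invertible. Moving `v` moves only the `v`-component of `φ` and leaves `∂A/∂x`
unchanged, so this block inherits the `v`-independence of `g_xx`. -/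

open Function

section Indices

variable {n : ℕ}

lemma uIdx_ne_xIdx (i : Fin (n + 1)) : uIdx n ≠ xIdx n i := by
  simp only [uIdx, xIdx, ne_eq, Fin.ext_iff, Fin.val_zero]; omega

lemma xIdx_ne_vIdx (i : Fin (n + 1)) : xIdx n i ≠ vIdx n := by
  simp only [vIdx, xIdx, ne_eq, Fin.ext_iff, Fin.val_last]; omega

lemma uIdx_ne_vIdx : uIdx n ≠ vIdx n := by
  simp only [uIdx, vIdx, ne_eq, Fin.ext_iff, Fin.val_last, Fin.val_zero]; omega

lemma xIdx_injective : Injective (xIdx n) := fun i j h => by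
  simp only [xIdx, Fin.ext_iff] at h; exact Fin.ext (by omega)

lemma uIdx_or_xIdx_or_vIdx (c : Fin (n + 3)) :
    c = uIdx n ∨ (∃ i, c = xIdx n i) ∨ c = vIdx n := by
  rcases c with ⟨c, hc⟩
  rcases Nat.eq_zero_or_pos c with h | h
  · left; simp [uIdx, h]
  · rcases Nat.lt_or_ge c (n + 2) with h2 | h2
    · exact Or.inr (Or.inl ⟨⟨c - 1, by omega⟩, by simp only [xIdx, Fin.ext_iff]; omega⟩)
    · right; right; simp only [vIdx, Fin.ext_iff, Fin.val_last]; omega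

lemma sum_univ_eq_uIdx_add_sum_xIdx_add_vIdx {M : Type*} [AddCommMonoid M] (f : Fin (n + 3) → M) :
    ∑ c, f c = f (uIdx n) + ∑ k, f (xIdx n k) + f (vIdx n) := by
  rw [Fin.sum_univ_succ, Fin.sum_univ_castSucc, ← add_assoc]
  rfl

lemma update_vIdx_apply_uIdx {β : Type*} (p : Fin (n + 3) → β) (t : β) :
    update p (vIdx n) t (uIdx n) = p (uIdx n) :=
  update_of_ne uIdx_ne_vIdx _ _

lemma update_vIdx_comp_xIdx {β : Type*} (p : Fin (n + 3) → β) (t : β) :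
    (fun j => update p (vIdx n) t (xIdx n j)) = fun j => p (xIdx n j) :=
  funext fun j => update_of_ne (xIdx_ne_vIdx j) _ _

end Indices

section PartialDeriv

variable {n : ℕ}

lemma partialDeriv'_eq_zero_of_update_eq {f : (Fin (n + 3) → ℝ) → ℝ} {j : Fin (n + 3)}
    {p : Fin (n + 3) → ℝ} (h : ∀ t, f (update p j t) = f p) : partialDeriv' n f j p = 0 := by
  simp [partialDeriv', h]

lemma partialDeriv'_apply_comp (h : ℝ → ℝ) (c j : Fin (n + 3)) (p : Fin (n + 3) → ℝ) :
    partialDeriv' n (fun q => h (q c)) j p = (Pi.single c (deriv h (p c)) : Fin (n + 3) → ℝ) j := by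
  by_cases hjc : j = c
  · subst hjc; simp [partialDeriv']
  · rw [Pi.single_apply, if_neg hjc]
    exact partialDeriv'_eq_zero_of_update_eq fun t => by rw [update_of_ne (Ne.symm hjc)]

lemma partialDeriv'_eq_fderiv {f : (Fin (n + 3) → ℝ) → ℝ} (hf : Differentiable ℝ f)
    (j : Fin (n + 3)) (p : Fin (n + 3) → ℝ) :
    partialDeriv' n f j p = fderiv ℝ f p (Pi.single j 1) := by
  have hf' : HasFDerivAt f (fderiv ℝ f p) (update p j (p j)) := by
    rw [update_eq_self]; exact (hf p).hasFDerivAt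
  exact (hf'.comp_hasDerivAt (p j) (hasDerivAt_update p j (p j))).deriv

lemma contDiff_partialDeriv' {f : (Fin (n + 3) → ℝ) → ℝ} (hf : ContDiff ℝ (⊤ : ℕ∞) f)
    (j : Fin (n + 3)) : ContDiff ℝ (⊤ : ℕ∞) fun p => partialDeriv' n f j p := by
  simp_rw [partialDeriv'_eq_fderiv (hf.differentiable (by simp))]
  exact (hf.fderiv_right le_rfl).clm_apply contDiff_const

lemma apply_update_eq_of_partialDeriv'_eq_zero {f : (Fin (n + 3) → ℝ) → ℝ}
    (hf : Differentiable ℝ f) {j : Fin (n + 3)} (h : ∀ q, partialDeriv' n f j q = 0)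
    (p : Fin (n + 3) → ℝ) (t : ℝ) : f (update p j t) = f p := by
  have hline : Differentiable ℝ fun s => f (update p j s) := fun s =>
    ((hf _).hasFDerivAt.comp_hasDerivAt s (hasDerivAt_update p j s)).differentiableAt
  have hderiv (s : ℝ) : deriv (fun s => f (update p j s)) s = 0 := by
    simpa only [partialDeriv', update_idem, update_self] using h (update p j s)
  simpa using is_const_of_deriv_eq_zero hline hderiv t (p j)

end PartialDeriv

namespace Matrix

variable {l m o R : Type*} [Fintype m]

lemma IsSymm.transpose_mul_mul [CommSemiring R] {G : Matrix m m R} (hG : G.IsSymm)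
    (J : Matrix m m R) : (Jᵀ * G * J).IsSymm := by
  simp only [IsSymm, transpose_mul, transpose_transpose, hG.eq, Matrix.mul_assoc]

variable [DecidableEq m] [NonAssocSemiring R]

lemma mul_apply_of_col_eq_single {M : Matrix l m R} {G : Matrix m o R} {u : m} {v : o} {k : R}
    (hG : G.col v = Pi.single u k) (a : l) : (M * G) a v = M a u * k := by
  simp only [mul_apply, ← col_apply G v, hG, Pi.single_apply, mul_ite, mul_zero,
    Finset.sum_ite_eq', Finset.mem_univ, if_true]

lemma transpose_mul_mul_apply_of_col_eq_single {J G : Matrix m m R} {u v : m} {k : R}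
    (hG : G.col v = Pi.single u 1) (hJ : J.col v = Pi.single v k) (a : m) :
    (Jᵀ * G * J) a v = J u a * k := by
  rw [mul_apply_of_col_eq_single hJ, mul_apply_of_col_eq_single hG, mul_one, transpose_apply]

end Matrix

lemma submatrix_xIdx_transpose_mul_mul {n : ℕ} {R : Type*} [NonAssocSemiring R]
    {J G : Matrix (Fin (n + 3)) (Fin (n + 3)) R} (hJ : ∀ j, J (uIdx n) (xIdx n j) = 0)
    (hG : G.col (vIdx n) = Pi.single (uIdx n) 1) (hGs : G.IsSymm) :
    (Jᵀ * G * J).submatrix (xIdx n) (xIdx n) =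
      (J.submatrix (xIdx n) (xIdx n))ᵀ * G.submatrix (xIdx n) (xIdx n) *
        J.submatrix (xIdx n) (xIdx n) := by
  have hJG (i) : (Jᵀ * G) (xIdx n i) (vIdx n) = 0 := by
    rw [Matrix.mul_apply_of_col_eq_single hG, Matrix.transpose_apply, hJ, zero_mul]
  have hGvx (l) : G (vIdx n) (xIdx n l) = 0 := by
    rw [← hGs.apply, ← Matrix.col_apply G (vIdx n), hG, Pi.single_eq_of_ne (uIdx_ne_xIdx l).symm]
  ext i j
  rw [Matrix.submatrix_apply, Matrix.mul_apply, sum_univ_eq_uIdx_add_sum_xIdx_add_vIdx, hJ,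
    mul_zero, zero_add, hJG, zero_mul, add_zero, Matrix.mul_apply]
  refine Finset.sum_congr rfl fun l _ => congrArg (· * _) ?_
  rw [Matrix.mul_apply, sum_univ_eq_uIdx_add_sum_xIdx_add_vIdx, Matrix.transpose_apply, hJ,
    zero_mul, zero_add, hGvx, mul_zero, add_zero, Matrix.mul_apply]
  rfl

lemma contDiff_transpose_mul_mul_apply {E ι : Type*} [NormedAddCommGroup E] [NormedSpace ℝ E]
    [Fintype ι] {k : WithTop ℕ∞} {J G : E → Matrix ι ι ℝ}
    (hJ : ∀ a b, ContDiff ℝ k fun p => J p a b) (hG : ∀ a b, ContDiff ℝ k fun p => G p a b)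
    (a b : ι) : ContDiff ℝ k fun p => ((J p)ᵀ * G p * J p) a b := by
  simp only [Matrix.mul_apply, Matrix.transpose_apply]
  exact ContDiff.sum fun c _ => (ContDiff.sum fun d _ => (hJ d a).mul (hG d c)).mul (hJ c b)

def xJacobian {ι : Type*} [DecidableEq ι] (A : ℝ → (ι → ℝ) → ι → ℝ) (u : ℝ) (x : ι → ℝ) :
    Matrix ι ι ℝ :=
  Matrix.of fun i j => deriv (fun t => A u (update x j t) i) (x j)

section ShapeTransform

variable {n : ℕ} {φ : (Fin (n + 3) → ℝ) → Fin (n + 3) → ℝ} {C : ℝ → ℝ}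
  {A : ℝ → (Fin (n + 1) → ℝ) → Fin (n + 1) → ℝ} {B : ℝ → (Fin (n + 1) → ℝ) → ℝ}

lemma IsShapeTransform.contDiff (hφ : IsShapeTransform n φ) : ContDiff ℝ (⊤ : ℕ∞) φ := by
  obtain ⟨C, A, B, hC, hA, hB, hC', -, hu, hx, hv⟩ := hφ
  have hcoord (c : Fin (n + 3)) : ContDiff ℝ (⊤ : ℕ∞) fun p : Fin (n + 3) → ℝ => p c :=
    contDiff_apply ℝ ℝ c
  have hux : ContDiff ℝ (⊤ : ℕ∞) fun p : Fin (n + 3) → ℝ => (p (uIdx n), fun j => p (xIdx n j)) :=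
    (hcoord _).prodMk (contDiff_pi.2 fun j => hcoord _)
  refine contDiff_pi.2 fun c => ?_
  rcases uIdx_or_xIdx_or_vIdx c with rfl | ⟨i, rfl⟩ | rfl
  · simp_rw [hu]; exact hC.comp (hcoord _)
  · simp_rw [hx]; exact (hA i).comp hux
  · simp_rw [hv]
    have hC'' : ContDiff ℝ (⊤ : ℕ∞) (deriv C) := (contDiff_infty_iff_deriv.mp hC).2
    exact ((hcoord _).div (hC''.comp (hcoord _)) fun p => hC' _).add (hB.comp hux)

lemma jacobianMatrix_uIdx (hu : ∀ p, φ p (uIdx n) = C (p (uIdx n))) (p : Fin (n + 3) → ℝ) :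
    jacobianMatrix n φ p (uIdx n) = Pi.single (uIdx n) (deriv C (p (uIdx n))) := by
  funext a
  simp only [jacobianMatrix, Matrix.of_apply, hu]
  exact partialDeriv'_apply_comp C _ a p

lemma apply_update_vIdx_of_ne (hu : ∀ p, φ p (uIdx n) = C (p (uIdx n)))
    (hx : ∀ p i, φ p (xIdx n i) = A (p (uIdx n)) (fun j => p (xIdx n j)) i)
    {c : Fin (n + 3)} (hc : c ≠ vIdx n) (p : Fin (n + 3) → ℝ) (t : ℝ) :
    φ (update p (vIdx n) t) c = φ p c := by
  rcases uIdx_or_xIdx_or_vIdx c with rfl | ⟨i, rfl⟩ | rfl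
  · rw [hu, hu, update_vIdx_apply_uIdx]
  · rw [hx, hx, update_vIdx_apply_uIdx, update_vIdx_comp_xIdx]
  · exact absurd rfl hc

lemma apply_update_vIdx (hu : ∀ p, φ p (uIdx n) = C (p (uIdx n)))
    (hx : ∀ p i, φ p (xIdx n i) = A (p (uIdx n)) (fun j => p (xIdx n j)) i)
    (p : Fin (n + 3) → ℝ) (t : ℝ) :
    φ (update p (vIdx n) t) = update (φ p) (vIdx n) (φ (update p (vIdx n) t) (vIdx n)) := by
  funext c
  by_cases hc : c = vIdx n
  · subst hc; rw [update_self]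
  · rw [update_of_ne hc, apply_update_vIdx_of_ne hu hx hc]

lemma jacobianMatrix_col_vIdx (hu : ∀ p, φ p (uIdx n) = C (p (uIdx n)))
    (hx : ∀ p i, φ p (xIdx n i) = A (p (uIdx n)) (fun j => p (xIdx n j)) i)
    (hv : ∀ p, φ p (vIdx n) =
      p (vIdx n) / deriv C (p (uIdx n)) + B (p (uIdx n)) (fun j => p (xIdx n j)))
    (p : Fin (n + 3) → ℝ) :
    (jacobianMatrix n φ p).col (vIdx n) = Pi.single (vIdx n) (deriv C (p (uIdx n)))⁻¹ := by
  funext c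
  by_cases hc : c = vIdx n
  · subst hc
    simp only [Matrix.col_apply, jacobianMatrix, Matrix.of_apply, partialDeriv', hv, update_self,
      update_vIdx_apply_uIdx, update_vIdx_comp_xIdx, Pi.single_eq_same]
    simp
  · rw [Matrix.col_apply, Pi.single_eq_of_ne hc]
    exact partialDeriv'_eq_zero_of_update_eq (f := fun q => φ q c)
      (apply_update_vIdx_of_ne hu hx hc p)

lemma jacobianMatrix_submatrix_xIdx
    (hx : ∀ p i, φ p (xIdx n i) = A (p (uIdx n)) (fun j => p (xIdx n j)) i)
    (p : Fin (n + 3) → ℝ) :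
    (jacobianMatrix n φ p).submatrix (xIdx n) (xIdx n) =
      xJacobian A (p (uIdx n)) (fun j => p (xIdx n j)) := by
  ext i j
  simp only [Matrix.submatrix_apply, jacobianMatrix, xJacobian, Matrix.of_apply, partialDeriv', hx,
    update_of_ne (uIdx_ne_xIdx j)]
  congr! 3 with t
  exact update_comp_eq_of_injective p xIdx_injective j t

end ShapeTransform

section Kundt

variable {n : ℕ} {g : (Fin (n + 3) → ℝ) → Matrix (Fin (n + 3)) (Fin (n + 3)) ℝ}

lemma IsKundtShape.col_vIdx (hg : IsKundtShape n g) (p : Fin (n + 3) → ℝ) :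
    (g p).col (vIdx n) = Pi.single (uIdx n) 1 := by
  funext d
  rw [Matrix.col_apply]
  rcases uIdx_or_xIdx_or_vIdx d with rfl | ⟨i, rfl⟩ | rfl
  · rw [hg.uv, Pi.single_eq_same]
  · rw [hg.xv, Pi.single_eq_of_ne (uIdx_ne_xIdx i).symm]
  · rw [hg.vv, Pi.single_eq_of_ne uIdx_ne_vIdx.symm]

lemma IsKundtShape.submatrix_xIdx_update_vIdx (hg : IsKundtShape n g) (p : Fin (n + 3) → ℝ)
    (t : ℝ) : (g (update p (vIdx n) t)).submatrix (xIdx n) (xIdx n) =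
      (g p).submatrix (xIdx n) (xIdx n) := by
  ext i j
  exact apply_update_eq_of_partialDeriv'_eq_zero (f := fun q => g q (xIdx n i) (xIdx n j))
    ((hg.smooth _ _).differentiable (by simp)) (fun q => hg.vIndep q i j) p t

lemma IsKundtShape.of_col_vIdx (smooth : ∀ i j, ContDiff ℝ (⊤ : ℕ∞) fun p => g p i j)
    (symm : ∀ p, (g p).IsSymm) (col_vIdx : ∀ p, (g p).col (vIdx n) = Pi.single (uIdx n) 1)
    (posDef : ∀ p, ((g p).submatrix (xIdx n) (xIdx n)).PosDef)
    (submatrix_xIdx_update_vIdx : ∀ p t,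
      (g (update p (vIdx n) t)).submatrix (xIdx n) (xIdx n) = (g p).submatrix (xIdx n) (xIdx n)) :
    IsKundtShape n g where
  smooth := smooth
  symm := symm
  vv p := (congrFun (col_vIdx p) _).trans (Pi.single_eq_of_ne uIdx_ne_vIdx.symm _)
  xv p i := (congrFun (col_vIdx p) _).trans (Pi.single_eq_of_ne (uIdx_ne_xIdx i).symm _)
  uv p := (congrFun (col_vIdx p) _).trans (Pi.single_eq_same _ _)
  posDef := posDef
  vIndep p i j := partialDeriv'_eq_zero_of_update_eq (f := fun q => g q (xIdx n i) (xIdx n j))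
    fun t => congrFun₂ (submatrix_xIdx_update_vIdx p t) i j

variable {φ : (Fin (n + 3) → ℝ) → Fin (n + 3) → ℝ} {C : ℝ → ℝ}
  {A : ℝ → (Fin (n + 1) → ℝ) → Fin (n + 1) → ℝ} {B : ℝ → (Fin (n + 1) → ℝ) → ℝ}

lemma pullbackMetric_col_vIdx (hg : IsKundtShape n g) (hC' : ∀ u, deriv C u ≠ 0)
    (hu : ∀ p, φ p (uIdx n) = C (p (uIdx n)))
    (hx : ∀ p i, φ p (xIdx n i) = A (p (uIdx n)) (fun j => p (xIdx n j)) i)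
    (hv : ∀ p, φ p (vIdx n) =
      p (vIdx n) / deriv C (p (uIdx n)) + B (p (uIdx n)) (fun j => p (xIdx n j)))
    (p : Fin (n + 3) → ℝ) :
    (pullbackMetric n φ g p).col (vIdx n) = Pi.single (uIdx n) 1 := by
  funext a
  rw [Matrix.col_apply, pullbackMetric, Matrix.transpose_mul_mul_apply_of_col_eq_single
    (hg.col_vIdx _) (jacobianMatrix_col_vIdx hu hx hv p), jacobianMatrix_uIdx hu]
  by_cases ha : a = uIdx n
  · subst ha; simp [hC']
  · simp [Pi.single_eq_of_ne ha]

lemma pullbackMetric_submatrix_xIdx (hg : IsKundtShape n g)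
    (hu : ∀ p, φ p (uIdx n) = C (p (uIdx n)))
    (hx : ∀ p i, φ p (xIdx n i) = A (p (uIdx n)) (fun j => p (xIdx n j)) i)
    (p : Fin (n + 3) → ℝ) :
    (pullbackMetric n φ g p).submatrix (xIdx n) (xIdx n) =
      (xJacobian A (p (uIdx n)) (fun j => p (xIdx n j)))ᵀ *
        (g (φ p)).submatrix (xIdx n) (xIdx n) *
          xJacobian A (p (uIdx n)) (fun j => p (xIdx n j)) := by
  rw [pullbackMetric, submatrix_xIdx_transpose_mul_mul _ (hg.col_vIdx _) (hg.symm _),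
    jacobianMatrix_submatrix_xIdx hx]
  intro j
  rw [jacobianMatrix_uIdx hu, Pi.single_eq_of_ne (uIdx_ne_xIdx j).symm]

lemma pullbackMetric_submatrix_xIdx_update_vIdx (hg : IsKundtShape n g)
    (hu : ∀ p, φ p (uIdx n) = C (p (uIdx n)))
    (hx : ∀ p i, φ p (xIdx n i) = A (p (uIdx n)) (fun j => p (xIdx n j)) i)
    (p : Fin (n + 3) → ℝ) (t : ℝ) :
    (pullbackMetric n φ g (update p (vIdx n) t)).submatrix (xIdx n) (xIdx n) =
      (pullbackMetric n φ g p).submatrix (xIdx n) (xIdx n) := by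
  rw [pullbackMetric_submatrix_xIdx hg hu hx, pullbackMetric_submatrix_xIdx hg hu hx,
    apply_update_vIdx hu hx, hg.submatrix_xIdx_update_vIdx, update_vIdx_apply_uIdx,
    update_vIdx_comp_xIdx]

end Kundt

/-- **Theorem 1 (forward direction).** Shape transformations preserve the class of
smooth metrics of Kundt shape. -/
theorem shapeTransform_preserves_kundtShape (n : ℕ)
    (φ : (Fin (n + 3) → ℝ) → Fin (n + 3) → ℝ)
    (g : (Fin (n + 3) → ℝ) → Matrix (Fin (n + 3)) (Fin (n + 3)) ℝ)
    (hφ : IsShapeTransform n φ) (hg : IsKundtShape n g) :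
    IsKundtShape n (pullbackMetric n φ g) := by
  have hφ_smooth := hφ.contDiff
  obtain ⟨C, A, B, -, -, -, hC', hA_unit, hu, hx, hv⟩ := hφ
  refine .of_col_vIdx ?_ (fun p => (hg.symm (φ p)).transpose_mul_mul _)
    (pullbackMetric_col_vIdx hg hC' hu hx hv) (fun p => ?_)
    (pullbackMetric_submatrix_xIdx_update_vIdx hg hu hx)
  · exact contDiff_transpose_mul_mul_apply
      (fun a b => contDiff_partialDeriv' (contDiff_pi.1 hφ_smooth a) b)
      (fun a b => (hg.smooth a b).comp hφ_smooth)
  · rw [pullbackMetric_submatrix_xIdx hg hu hx, ← Matrix.conjTranspose_eq_transpose_of_trivial]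
    exact (hg.posDef (φ p)).conjTranspose_mul_mul_same
      (Matrix.mulVec_injective_of_isUnit (hA_unit _ _))
end
end

section
/- Let Φ : ℝ^n → ℝ^n be a smooth diffeomorphism such that for every smooth metric g of Kundt shape the pullback Φ*g is again a smooth metric of Kundt shape. Then Φ is a shape transformation: there exist smooth functions C : ℝ → ℝ with C'(u) ≠ 0 for all u, A : ℝ × ℝ^{n-2} → ℝ^{n-2} with invertible x-Jacobian (∂A^i/∂x^j) at every point, and B : ℝ × ℝ^{n-2} → ℝ, such that Φ(u,x,v) = (C(u), A(u,x), v/C'(u) + B(u,x)) for all (u,x,v) (Theorem 1, converse direction). -/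
open Matrix

noncomputable section

/-!
Pull back the flat Kundt metrics `K du² + 2 du dv + Σ (dxᵏ)²` for `K = 0, 1`. The difference of
their `vv` entries is `(∂ᵥΦᵘ)²`, so `∂ᵥΦᵘ = 0`; then the `vv`, `uv` and `xv` entries give
`∂ᵥΦˣ = 0`, `∂ᵤΦᵘ ∂ᵥΦᵛ = 1` and `∂ₓΦᵘ = 0`, and the `x`-block of the pullback is `GᵀG` with `G`
the `x`-block of the Jacobian, so `G` is invertible. Integrating along coordinate lines, `Φᵘ`
depends on `u` alone, `Φˣ` on `(u, x)`, and `Φᵛ` is affine in `v` with slope `1 / C'(u)`.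
-/

namespace Kundt

open Function

variable {n : ℕ}

theorem uIdx_ne_vIdx : uIdx n ≠ vIdx n :=
  fun h => by simpa [uIdx, vIdx] using congrArg Fin.val h

theorem xIdx_ne_uIdx (k : Fin (n + 1)) : xIdx n k ≠ uIdx n :=
  fun h => by simpa [uIdx, xIdx] using congrArg Fin.val h

theorem xIdx_ne_vIdx (k : Fin (n + 1)) : xIdx n k ≠ vIdx n :=
  fun h => absurd (congrArg Fin.val h) (by simp [vIdx, xIdx]; omega)

theorem xIdx_injective : Injective (xIdx n) :=
  fun i j h => by simpa [xIdx, Fin.ext_iff] using h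

theorem xIdx_eq_succ_castSucc (k : Fin (n + 1)) : xIdx n k = k.castSucc.succ := rfl

theorem vIdx_eq_succ_last : vIdx n = (Fin.last (n + 1)).succ := rfl

theorem eq_uIdx_or_eq_vIdx_or_eq_xIdx (j : Fin (n + 3)) :
    j = uIdx n ∨ j = vIdx n ∨ ∃ k, j = xIdx n k := by
  induction j using Fin.cases with
  | zero => exact Or.inl rfl
  | succ j =>
    induction j using Fin.lastCases with
    | last => exact Or.inr (Or.inl rfl)
    | cast k => exact Or.inr (Or.inr ⟨k, rfl⟩)

/-- The flat metric `K du² + 2 du dv + Σ (dxᵏ)²`. -/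
def testMetric (n : ℕ) (K : ℝ) : Matrix (Fin (n + 3)) (Fin (n + 3)) ℝ :=
  K • vecMulVec (Pi.single (uIdx n) 1) (Pi.single (uIdx n) 1)
    + vecMulVec (Pi.single (uIdx n) 1) (Pi.single (vIdx n) 1)
    + vecMulVec (Pi.single (vIdx n) 1) (Pi.single (uIdx n) 1)
    + ∑ k, vecMulVec (Pi.single (xIdx n k) 1) (Pi.single (xIdx n k) 1)

theorem dotProduct_testMetric_mulVec (K : ℝ) (w z : Fin (n + 3) → ℝ) :
    w ⬝ᵥ testMetric n K *ᵥ z = K * w (uIdx n) * z (uIdx n) + w (uIdx n) * z (vIdx n)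
      + w (vIdx n) * z (uIdx n) + ∑ k, w (xIdx n k) * z (xIdx n k) := by
  simp [testMetric, dotProduct_mulVec, vecMul_add, vecMul_smul, vecMul_sum, vecMul_vecMulVec,
    add_dotProduct, sum_dotProduct, mul_assoc]

theorem isKundtShape_testMetric (K : ℝ) : IsKundtShape n fun _ => testMetric n K where
  smooth _ _ := contDiff_const
  symm _ := by
    simp [IsSymm, testMetric, transpose_vecMulVec, Matrix.transpose_sum]
    abel
  vv _ := by simp [testMetric, vecMulVec_apply, Matrix.sum_apply, uIdx_ne_vIdx, xIdx_ne_vIdx]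
  xv _ _ := by
    simp [testMetric, vecMulVec_apply, Matrix.sum_apply, uIdx_ne_vIdx, xIdx_ne_vIdx, xIdx_ne_uIdx]
  uv _ := by
    simp [testMetric, vecMulVec_apply, Matrix.sum_apply, uIdx_ne_vIdx, xIdx_ne_vIdx, xIdx_ne_uIdx]
  posDef _ := by
    have hblock : (of fun i j : Fin (n + 1) => testMetric n K (xIdx n i) (xIdx n j)) = 1 := by
      ext i j
      simp [testMetric, vecMulVec_apply, Matrix.sum_apply, Pi.single_apply, xIdx_ne_vIdx,
        xIdx_ne_uIdx, xIdx_injective.eq_iff, one_apply]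
    exact hblock ▸ PosDef.one
  vIndep _ _ _ := by simp [partialDeriv']

theorem transpose_mul_testMetric_mul_apply (J : Matrix (Fin (n + 3)) (Fin (n + 3)) ℝ) (K : ℝ)
    (a b : Fin (n + 3)) :
    (Jᵀ * testMetric n K * J) a b = K * J (uIdx n) a * J (uIdx n) b + J (uIdx n) a * J (vIdx n) b
      + J (vIdx n) a * J (uIdx n) b + ∑ k, J (xIdx n k) a * J (xIdx n k) b := by
  rw [mul_mul_apply, dotProduct_testMetric_mulVec]
  rfl

def PreservesKundtShape (n : ℕ) (Φ : (Fin (n + 3) → ℝ) → Fin (n + 3) → ℝ) : Prop :=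
  ∀ g, IsKundtShape n g → IsKundtShape n (pullbackMetric n Φ g)

theorem isUnit_of_posDef_transpose_mul_self {m : Type*} [Fintype m] [DecidableEq m]
    {G : Matrix m m ℝ} (hG : (Gᵀ * G).PosDef) : IsUnit G := by
  have hdet := (isUnit_iff_isUnit_det _).mp hG.isUnit
  rw [det_mul, det_transpose, IsUnit.mul_iff] at hdet
  exact (isUnit_iff_isUnit_det G).mpr hdet.1

namespace PreservesKundtShape

variable {Φ : (Fin (n + 3) → ℝ) → Fin (n + 3) → ℝ}

theorem jacobianMatrix_uIdx_vIdx_eq_zero (hK : PreservesKundtShape n Φ) (p : Fin (n + 3) → ℝ) :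
    jacobianMatrix n Φ p (uIdx n) (vIdx n) = 0 := by
  have h₀ := (hK _ (isKundtShape_testMetric 0)).vv p
  have h₁ := (hK _ (isKundtShape_testMetric 1)).vv p
  rw [pullbackMetric, transpose_mul_testMetric_mul_apply] at h₀ h₁
  exact mul_self_eq_zero.mp (by linarith)

theorem jacobianMatrix_xIdx_vIdx_eq_zero (hK : PreservesKundtShape n Φ) (p : Fin (n + 3) → ℝ)
    (k : Fin (n + 1)) : jacobianMatrix n Φ p (xIdx n k) (vIdx n) = 0 := by
  have h₀ := (hK _ (isKundtShape_testMetric 0)).vv p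
  rw [pullbackMetric, transpose_mul_testMetric_mul_apply, hK.jacobianMatrix_uIdx_vIdx_eq_zero]
    at h₀
  have hsum : ∑ m, jacobianMatrix n Φ p (xIdx n m) (vIdx n) *
      jacobianMatrix n Φ p (xIdx n m) (vIdx n) = 0 := by
    linarith
  exact mul_self_eq_zero.mp
    ((Finset.sum_eq_zero_iff_of_nonneg fun _ _ => mul_self_nonneg _).mp hsum k (Finset.mem_univ k))

theorem jacobianMatrix_uu_mul_vv_eq_one (hK : PreservesKundtShape n Φ) (p : Fin (n + 3) → ℝ) :
    jacobianMatrix n Φ p (uIdx n) (uIdx n) * jacobianMatrix n Φ p (vIdx n) (vIdx n) = 1 := by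
  have h₀ := (hK _ (isKundtShape_testMetric 0)).uv p
  simpa [pullbackMetric, transpose_mul_testMetric_mul_apply, hK.jacobianMatrix_uIdx_vIdx_eq_zero,
    hK.jacobianMatrix_xIdx_vIdx_eq_zero] using h₀

theorem jacobianMatrix_uIdx_xIdx_eq_zero (hK : PreservesKundtShape n Φ) (p : Fin (n + 3) → ℝ)
    (k : Fin (n + 1)) : jacobianMatrix n Φ p (uIdx n) (xIdx n k) = 0 := by
  have h₀ := (hK _ (isKundtShape_testMetric 0)).xv p k
  simp only [pullbackMetric, transpose_mul_testMetric_mul_apply,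
    hK.jacobianMatrix_uIdx_vIdx_eq_zero, hK.jacobianMatrix_xIdx_vIdx_eq_zero, zero_mul, mul_zero,
    Finset.sum_const_zero, add_zero, zero_add] at h₀
  exact (mul_eq_zero.mp h₀).resolve_right (right_ne_zero_of_mul_eq_one
    (hK.jacobianMatrix_uu_mul_vv_eq_one p))

theorem isUnit_jacobianMatrix_xBlock (hK : PreservesKundtShape n Φ) (p : Fin (n + 3) → ℝ) :
    IsUnit (of fun i j : Fin (n + 1) => jacobianMatrix n Φ p (xIdx n i) (xIdx n j)) := by
  apply isUnit_of_posDef_transpose_mul_self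
  convert (hK _ (isKundtShape_testMetric 0)).posDef p using 1
  ext i j
  rw [of_apply, pullbackMetric, transpose_mul_testMetric_mul_apply, mul_apply]
  simp [hK.jacobianMatrix_uIdx_xIdx_eq_zero]

end PreservesKundtShape

theorem funext_idx {α : Type*} {p q : Fin (n + 3) → α} (hu : p (uIdx n) = q (uIdx n))
    (hx : ∀ k, p (xIdx n k) = q (xIdx n k)) (hv : p (vIdx n) = q (vIdx n)) : p = q := by
  funext j
  rcases eq_uIdx_or_eq_vIdx_or_eq_xIdx j with rfl | rfl | ⟨k, rfl⟩
  exacts [hu, hv, hx k]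

def mkPoint (n : ℕ) (u : ℝ) (x : Fin (n + 1) → ℝ) (v : ℝ) : Fin (n + 3) → ℝ :=
  Fin.cons u (Fin.snoc x v)

@[simp]
theorem mkPoint_uIdx (u : ℝ) (x : Fin (n + 1) → ℝ) (v : ℝ) : mkPoint n u x v (uIdx n) = u := rfl

@[simp]
theorem mkPoint_xIdx (u : ℝ) (x : Fin (n + 1) → ℝ) (v : ℝ) (k : Fin (n + 1)) :
    mkPoint n u x v (xIdx n k) = x k := by
  rw [xIdx_eq_succ_castSucc, mkPoint, Fin.cons_succ, Fin.snoc_castSucc]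

@[simp]
theorem mkPoint_vIdx (u : ℝ) (x : Fin (n + 1) → ℝ) (v : ℝ) : mkPoint n u x v (vIdx n) = v := by
  rw [vIdx_eq_succ_last, mkPoint, Fin.cons_succ, Fin.snoc_last]

theorem update_vIdx_eq_mkPoint (p : Fin (n + 3) → ℝ) (t : ℝ) :
    update p (vIdx n) t = mkPoint n (p (uIdx n)) (fun k => p (xIdx n k)) t :=
  funext_idx (by simp [uIdx_ne_vIdx]) (by simp [xIdx_ne_vIdx]) (by simp)

theorem update_mkPoint_xIdx (u : ℝ) (x : Fin (n + 1) → ℝ) (v : ℝ) (j : Fin (n + 1)) (t : ℝ) :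
    update (mkPoint n u x v) (xIdx n j) t = mkPoint n u (update x j t) v :=
  funext_idx (by simp [(xIdx_ne_uIdx j).symm])
    (by simp [update_apply, xIdx_injective.eq_iff]) (by simp [(xIdx_ne_vIdx j).symm])

theorem contDiff_mkPoint (v : ℝ) :
    ContDiff ℝ (⊤ : ℕ∞) fun q : ℝ × (Fin (n + 1) → ℝ) => mkPoint n q.1 q.2 v := by
  refine contDiff_pi.2 fun j => ?_
  induction j using Fin.cases with
  | zero => exact contDiff_fst
  | succ k =>
    induction k using Fin.lastCases with
    | last => simpa [mkPoint] using contDiff_const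
    | cast i => simpa [mkPoint] using contDiff_pi.mp contDiff_snd i

section PartialDeriv

variable {f : (Fin (n + 3) → ℝ) → ℝ}

theorem hasDerivAt_apply_update (hf : Differentiable ℝ f) (p : Fin (n + 3) → ℝ)
    (j : Fin (n + 3)) (t : ℝ) :
    HasDerivAt (fun s => f (update p j s)) (partialDeriv' n f j (update p j t)) t := by
  have hd : DifferentiableAt ℝ (fun s => f (update p j s)) t :=
    (hf _).comp t (hasDerivAt_update p j t).differentiableAt
  have heq : partialDeriv' n f j (update p j t) = deriv (fun s => f (update p j s)) t := by
    simp only [partialDeriv', update_self, update_idem]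
  exact heq ▸ hd.hasDerivAt

theorem apply_update_eq_add_mul (hf : Differentiable ℝ f) {p : Fin (n + 3) → ℝ} {j : Fin (n + 3)}
    {c : ℝ} (hc : ∀ t, partialDeriv' n f j (update p j t) = c) (t : ℝ) :
    f (update p j t) = f p + c * (t - p j) := by
  have hg : ∀ s, HasDerivAt (fun s => f (update p j s) - c * s) 0 s := fun s => by
    have := (hasDerivAt_apply_update hf p j s).sub ((hasDerivAt_id s).const_mul c)
    rwa [hc, mul_one, sub_self] at this
  have := is_const_of_deriv_eq_zero (fun s => (hg s).differentiableAt) (fun s => (hg s).deriv)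
    t (p j)
  simp only [update_eq_self] at this
  linarith

theorem apply_eq_of_partialDeriv'_eq_zero (hf : Differentiable ℝ f) {s : Finset (Fin (n + 3))}
    (hs : ∀ j ∈ s, ∀ q, partialDeriv' n f j q = 0) {p q : Fin (n + 3) → ℝ}
    (hpq : ∀ j ∉ s, p j = q j) : f p = f q := by
  have key : ∀ t ⊆ s, f (t.piecewise q p) = f p := by
    intro t
    induction t using Finset.induction_on with
    | empty => simp
    | insert j t _ ih =>
      intro ht
      rw [Finset.piecewise_insert,
        apply_update_eq_add_mul hf (fun _ => hs j (ht (Finset.mem_insert_self j t)) _), zero_mul,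
        add_zero, ih ((Finset.subset_insert j t).trans ht)]
  have hq : s.piecewise q p = q := by
    funext j
    by_cases hj : j ∈ s
    · simp [hj]
    · simp [hj, hpq j hj]
  rw [← key s subset_rfl, hq]

end PartialDeriv

section ShapeFunctions

variable {Φ : (Fin (n + 3) → ℝ) → Fin (n + 3) → ℝ}

-- The functions `C`, `A`, `B` of the shape transformation, read off `Φ` on the hyperplane `v = 0`.
def shapeC (Φ : (Fin (n + 3) → ℝ) → Fin (n + 3) → ℝ) (u : ℝ) : ℝ :=
  Φ (mkPoint n u 0 0) (uIdx n)

def shapeA (Φ : (Fin (n + 3) → ℝ) → Fin (n + 3) → ℝ) (u : ℝ) (x : Fin (n + 1) → ℝ)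
    (i : Fin (n + 1)) : ℝ :=
  Φ (mkPoint n u x 0) (xIdx n i)

def shapeB (Φ : (Fin (n + 3) → ℝ) → Fin (n + 3) → ℝ) (u : ℝ) (x : Fin (n + 1) → ℝ) : ℝ :=
  Φ (mkPoint n u x 0) (vIdx n)

theorem contDiff_shapeC (hΦ : ContDiff ℝ (⊤ : ℕ∞) Φ) : ContDiff ℝ (⊤ : ℕ∞) (shapeC Φ) :=
  (contDiff_pi.mp hΦ _).comp ((contDiff_mkPoint 0).comp (contDiff_id.prodMk contDiff_const))

theorem contDiff_shapeA (hΦ : ContDiff ℝ (⊤ : ℕ∞) Φ) (i : Fin (n + 1)) :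
    ContDiff ℝ (⊤ : ℕ∞) fun q : ℝ × (Fin (n + 1) → ℝ) => shapeA Φ q.1 q.2 i :=
  (contDiff_pi.mp hΦ _).comp (contDiff_mkPoint 0)

theorem contDiff_shapeB (hΦ : ContDiff ℝ (⊤ : ℕ∞) Φ) :
    ContDiff ℝ (⊤ : ℕ∞) fun q : ℝ × (Fin (n + 1) → ℝ) => shapeB Φ q.1 q.2 :=
  (contDiff_pi.mp hΦ _).comp (contDiff_mkPoint 0)

namespace PreservesKundtShape

theorem apply_uIdx_eq_shapeC (hK : PreservesKundtShape n Φ) (hd : Differentiable ℝ Φ)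
    (p : Fin (n + 3) → ℝ) : Φ p (uIdx n) = shapeC Φ (p (uIdx n)) := by
  refine apply_eq_of_partialDeriv'_eq_zero (differentiable_pi.mp hd _)
    (s := Finset.univ.erase (uIdx n)) (fun j hj q => ?_) fun j hj => ?_
  · rcases eq_uIdx_or_eq_vIdx_or_eq_xIdx j with rfl | rfl | ⟨k, rfl⟩
    · simp at hj
    · exact hK.jacobianMatrix_uIdx_vIdx_eq_zero q
    · exact hK.jacobianMatrix_uIdx_xIdx_eq_zero q k
  · simp only [Finset.mem_erase, Finset.mem_univ, and_true, not_not] at hj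
    simp [hj]

theorem jacobianMatrix_uIdx_uIdx_eq_deriv_shapeC (hK : PreservesKundtShape n Φ)
    (hd : Differentiable ℝ Φ) (p : Fin (n + 3) → ℝ) :
    jacobianMatrix n Φ p (uIdx n) (uIdx n) = deriv (shapeC Φ) (p (uIdx n)) := by
  have : (fun t => Φ (update p (uIdx n) t) (uIdx n)) = shapeC Φ := by
    funext t
    rw [hK.apply_uIdx_eq_shapeC hd, update_self]
  exact congrArg (deriv · (p (uIdx n))) this

theorem deriv_shapeC_ne_zero (hK : PreservesKundtShape n Φ) (hd : Differentiable ℝ Φ) (u : ℝ) :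
    deriv (shapeC Φ) u ≠ 0 := by
  have h := hK.jacobianMatrix_uu_mul_vv_eq_one (mkPoint n u 0 0)
  rw [hK.jacobianMatrix_uIdx_uIdx_eq_deriv_shapeC hd, mkPoint_uIdx] at h
  exact left_ne_zero_of_mul_eq_one h

theorem apply_xIdx_eq_shapeA (hK : PreservesKundtShape n Φ) (hd : Differentiable ℝ Φ)
    (p : Fin (n + 3) → ℝ) (i : Fin (n + 1)) :
    Φ p (xIdx n i) = shapeA Φ (p (uIdx n)) (fun j => p (xIdx n j)) i := by
  have h := apply_update_eq_add_mul (differentiable_pi.mp hd (xIdx n i))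
    (fun t => hK.jacobianMatrix_xIdx_vIdx_eq_zero (update p (vIdx n) t) i) 0
  rw [zero_mul, add_zero, update_vIdx_eq_mkPoint] at h
  exact h.symm

theorem apply_vIdx_eq_div_add_shapeB (hK : PreservesKundtShape n Φ) (hd : Differentiable ℝ Φ)
    (p : Fin (n + 3) → ℝ) : Φ p (vIdx n) =
      p (vIdx n) / deriv (shapeC Φ) (p (uIdx n)) + shapeB Φ (p (uIdx n)) fun j => p (xIdx n j) := by
  have hvv : ∀ t, jacobianMatrix n Φ (update p (vIdx n) t) (vIdx n) (vIdx n) =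
      (deriv (shapeC Φ) (p (uIdx n)))⁻¹ := fun t => by
    have h := hK.jacobianMatrix_uu_mul_vv_eq_one (update p (vIdx n) t)
    rw [hK.jacobianMatrix_uIdx_uIdx_eq_deriv_shapeC hd, update_of_ne uIdx_ne_vIdx] at h
    exact eq_inv_of_mul_eq_one_right h
  have h := apply_update_eq_add_mul (differentiable_pi.mp hd (vIdx n)) hvv 0
  rw [update_vIdx_eq_mkPoint] at h
  rw [shapeB, h]
  ring

theorem isUnit_jacobian_shapeA (hK : PreservesKundtShape n Φ) (u : ℝ) (x : Fin (n + 1) → ℝ) :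
    IsUnit (of fun i j : Fin (n + 1) => deriv (fun t => shapeA Φ u (update x j t) i) (x j)) := by
  convert hK.isUnit_jacobianMatrix_xBlock (mkPoint n u x 0) using 2
  ext i j
  simp only [of_apply, jacobianMatrix, partialDeriv', shapeA, update_mkPoint_xIdx, mkPoint_xIdx]

end PreservesKundtShape

end ShapeFunctions

end Kundt

open Kundt

theorem kundtShape_preserving_diffeo_isShapeTransform_general (n : ℕ)
    (Φ : (Fin (n + 3) → ℝ) → Fin (n + 3) → ℝ)
    (hΦ : ContDiff ℝ (⊤ : ℕ∞) Φ)
    (hpres : ∀ g : (Fin (n + 3) → ℝ) → Matrix (Fin (n + 3)) (Fin (n + 3)) ℝ,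
      IsKundtShape n g → IsKundtShape n (pullbackMetric n Φ g)) :
    IsShapeTransform n Φ := by
  have hd : Differentiable ℝ Φ := hΦ.differentiable (by simp)
  have hK : PreservesKundtShape n Φ := hpres
  exact ⟨shapeC Φ, shapeA Φ, shapeB Φ, contDiff_shapeC hΦ, contDiff_shapeA hΦ,
    contDiff_shapeB hΦ, hK.deriv_shapeC_ne_zero hd, hK.isUnit_jacobian_shapeA,
    hK.apply_uIdx_eq_shapeC hd, hK.apply_xIdx_eq_shapeA hd, hK.apply_vIdx_eq_div_add_shapeB hd⟩

/-- **Theorem 1 (converse direction).** A smooth diffeomorphism of `ℝ^(n+3)` that maps every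
smooth metric of Kundt shape to a smooth metric of Kundt shape under pullback is a shape
transformation. -/
theorem kundtShape_preserving_diffeo_isShapeTransform (n : ℕ)
    (Φ : (Fin (n + 3) → ℝ) → Fin (n + 3) → ℝ)
    (hΦ : ContDiff ℝ (⊤ : ℕ∞) Φ)
    (hdiffeo : ∃ Ψ : (Fin (n + 3) → ℝ) → Fin (n + 3) → ℝ,
      ContDiff ℝ (⊤ : ℕ∞) Ψ ∧ Function.LeftInverse Ψ Φ ∧ Function.RightInverse Ψ Φ)
    (hpres : ∀ g : (Fin (n + 3) → ℝ) → Matrix (Fin (n + 3)) (Fin (n + 3)) ℝ,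
      IsKundtShape n g → IsKundtShape n (pullbackMetric n Φ g)) :
    IsShapeTransform n Φ :=
  kundtShape_preserving_diffeo_isShapeTransform_general n Φ hΦ hpres
end
end

section
/- Let n = 3 with coordinates (u, x, v) on ℝ³, let g be a smooth metric of Kundt shape and let φ be a shape transformation. Then the second v-derivative of the (u,x)-entry of g is a relative invariant: there exists a smooth nowhere-vanishing function λ : ℝ³ → ℝ such that ∂²_v (φ*g)_{ux}(p) = λ(p) · (∂²_v g_{ux})(φ(p)) for all p ∈ ℝ³ (Appendix: W_{vv} is a relative differential invariant of the shape-preserving pseudogroup). -/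
open Matrix

noncomputable section

/-- Coordinates on `ℝ³` are `(u, x, v)` with indices `0, 1, 2`.
A smooth metric of Kundt shape on `ℝ³`. -/
structure IsKundtShape3 (g : (Fin 3 → ℝ) → Matrix (Fin 3) (Fin 3) ℝ) : Prop where
  smooth : ∀ i j, ContDiff ℝ (⊤ : ℕ∞) fun p => g p i j
  symm : ∀ p, (g p).IsSymm
  vv : ∀ p, g p 2 2 = 0
  xv : ∀ p, g p 1 2 = 0
  uv : ∀ p, g p 0 2 = 1
  xx_pos : ∀ p, 0 < g p 1 1
  vIndep : ∀ p, deriv (fun t => g (Function.update p 2 t) 1 1) (p 2) = 0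

/-- A shape transformation `φ(u,x,v) = (C(u), A(u,x), v/C'(u) + B(u,x))` of `ℝ³`. -/
def IsShapeTransform3 (φ : (Fin 3 → ℝ) → Fin 3 → ℝ) : Prop :=
  ∃ C : ℝ → ℝ, ∃ A B : ℝ → ℝ → ℝ,
    ContDiff ℝ (⊤ : ℕ∞) C ∧
    ContDiff ℝ (⊤ : ℕ∞) (fun q : ℝ × ℝ => A q.1 q.2) ∧
    ContDiff ℝ (⊤ : ℕ∞) (fun q : ℝ × ℝ => B q.1 q.2) ∧
    (∀ u, deriv C u ≠ 0) ∧
    (∀ u x, deriv (A u) x ≠ 0) ∧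
    (∀ p, φ p 0 = C (p 0)) ∧
    (∀ p, φ p 1 = A (p 0) (p 1)) ∧
    (∀ p, φ p 2 = p 2 / deriv C (p 0) + B (p 0) (p 1))

/-- The Jacobian matrix `Dφ_p` of `φ : ℝ³ → ℝ³` at `p`. -/
def jacobianMatrix3 (φ : (Fin 3 → ℝ) → Fin 3 → ℝ) (p : Fin 3 → ℝ) :
    Matrix (Fin 3) (Fin 3) ℝ :=
  Matrix.of fun i j => deriv (fun t => φ (Function.update p j t) i) (p j)

/-- The pullback metric `(φ*g)(p) = (Dφ_p)ᵀ · g(φ(p)) · Dφ_p`. -/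
def pullbackMetric3 (φ : (Fin 3 → ℝ) → Fin 3 → ℝ)
    (g : (Fin 3 → ℝ) → Matrix (Fin 3) (Fin 3) ℝ) (p : Fin 3 → ℝ) :
    Matrix (Fin 3) (Fin 3) ℝ :=
  (jacobianMatrix3 φ p)ᵀ * g (φ p) * jacobianMatrix3 φ p

/-- Second partial derivative in the coordinate `v` of a scalar function on `ℝ³`, at `p`. -/
def d2v (f : (Fin 3 → ℝ) → ℝ) (p : Fin 3 → ℝ) : ℝ :=
  deriv (deriv (fun t => f (Function.update p 2 t))) (p 2)

/-- Third partial derivative in the coordinate `v` of a scalar function on `ℝ³`, at `p`. -/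
def d3v (f : (Fin 3 → ℝ) → ℝ) (p : Fin 3 → ℝ) : ℝ :=
  deriv (deriv (deriv (fun t => f (Function.update p 2 t)))) (p 2)

open Function

/-!
Along a `v`-line (`u`, `x` fixed) a shape transformation acts on `v` by the affine map
`v ↦ v / C'(u) + B(u, x)`, and the Jacobian entries entering `(φ*g)_{ux}` do not depend on `v`.
Since `g_{xx}` does not depend on `v` either, along such a line
`(φ*g)_{ux} = C' A_x · (g_{ux} ∘ φ) + (terms constant in v)`, so differentiating twice in `v`
multiplies `∂²_v g_{ux}` by `C' A_x / C'² = A_x / C'`.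
-/

section AffineReparametrization

variable {𝕜 : Type*} [NontriviallyNormedField 𝕜]

theorem deriv_comp_div_add_const (f : 𝕜 → 𝕜) (c b : 𝕜) :
    deriv (fun t => f (t / c + b)) = fun t => deriv f (t / c + b) / c := by
  funext t
  have h := deriv_comp_mul_left c⁻¹ (fun s => f (s + b)) t
  simp only [smul_eq_mul, deriv_comp_add_const] at h
  simpa only [div_eq_inv_mul] using h

theorem deriv_deriv_const_mul_comp_div_add_const (f : 𝕜 → 𝕜) (m c b K t : 𝕜) :
    deriv (deriv fun s => m * f (s / c + b) + K) t = m / c ^ 2 * deriv (deriv f) (t / c + b) := by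
  simp only [deriv_add_const', deriv_const_mul_field', deriv_comp_div_add_const,
    deriv_div_const]
  ring

end AffineReparametrization

theorem ContDiff.deriv_of_uncurry {𝕜 E F : Type*} [NontriviallyNormedField 𝕜]
    [NormedAddCommGroup E] [NormedSpace 𝕜 E] [NormedAddCommGroup F] [NormedSpace 𝕜 F]
    {f : E → 𝕜 → F} {g : E → 𝕜} {m n : WithTop ℕ∞} (hf : ContDiff 𝕜 m (uncurry f))
    (hg : ContDiff 𝕜 n g) (hnm : n + 1 ≤ m) : ContDiff 𝕜 n fun x => deriv (f x) (g x) :=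
  (hf.fderiv hg hnm).clm_apply contDiff_const

namespace IsKundtShape3

variable {g : (Fin 3 → ℝ) → Matrix (Fin 3) (Fin 3) ℝ}

theorem xx_update_two (hg : IsKundtShape3 g) (q : Fin 3 → ℝ) (s : ℝ) :
    g (update q 2 s) 1 1 = g q 1 1 := by
  have hdiff : Differentiable ℝ fun t => g (update q 2 t) 1 1 :=
    ((hg.smooth 1 1).comp (contDiff_update _ q 2)).differentiable (by simp)
  have hderiv (t : ℝ) : deriv (fun t => g (update q 2 t) 1 1) t = 0 := by
    simpa only [update_idem, update_self] using hg.vIndep (update q 2 t)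
  simpa only [update_eq_self] using is_const_of_deriv_eq_zero hdiff hderiv s (q 2)

theorem transpose_mul_mul_zero_one (hg : IsKundtShape3 g) (q : Fin 3 → ℝ)
    (J : Matrix (Fin 3) (Fin 3) ℝ) (hJ : J 0 1 = 0) :
    (Jᵀ * g q * J) 0 1 = J 0 0 * (g q 0 1 * J 1 1 + J 2 1) + J 1 0 * g q 1 1 * J 1 1 := by
  have g20 : g q 2 0 = 1 := by rw [(hg.symm q).apply 0 2, hg.uv]
  have g21 : g q 2 1 = 0 := by rw [(hg.symm q).apply 1 2, hg.xv]
  simp only [Matrix.mul_apply, Fin.sum_univ_three, Matrix.transpose_apply, hJ, g20, g21,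
    hg.vv, hg.xv, hg.uv]
  ring

end IsKundtShape3

structure HasShapeComponents (φ : (Fin 3 → ℝ) → Fin 3 → ℝ) (C : ℝ → ℝ) (A B : ℝ → ℝ → ℝ) :
    Prop where
  apply_zero : ∀ p, φ p 0 = C (p 0)
  apply_one : ∀ p, φ p 1 = A (p 0) (p 1)
  apply_two : ∀ p, φ p 2 = p 2 / deriv C (p 0) + B (p 0) (p 1)

namespace HasShapeComponents

variable {φ : (Fin 3 → ℝ) → Fin 3 → ℝ} {C : ℝ → ℝ} {A B : ℝ → ℝ → ℝ}

theorem apply_update_two (hφ : HasShapeComponents φ C A B) (p : Fin 3 → ℝ) (t : ℝ) :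
    φ (update p 2 t) = update (φ p) 2 (t / deriv C (p 0) + B (p 0) (p 1)) := by
  funext i
  fin_cases i <;>
    simp [hφ.apply_zero, hφ.apply_one, hφ.apply_two, update_of_ne]

theorem pullbackMetric3_zero_one {g : (Fin 3 → ℝ) → Matrix (Fin 3) (Fin 3) ℝ}
    (hg : IsKundtShape3 g) (hφ : HasShapeComponents φ C A B) (q : Fin 3 → ℝ) :
    pullbackMetric3 φ g q 0 1 =
      deriv C (q 0) * (g (φ q) 0 1 * deriv (A (q 0)) (q 1) + deriv (B (q 0)) (q 1)) +
        deriv (fun u => A u (q 1)) (q 0) * g (φ q) 1 1 * deriv (A (q 0)) (q 1) := by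
  rw [pullbackMetric3, hg.transpose_mul_mul_zero_one]
  · simp [jacobianMatrix3, hφ.apply_zero, hφ.apply_one, hφ.apply_two, update_of_ne]
  · simp [jacobianMatrix3, hφ.apply_zero, update_of_ne]

theorem pullbackMetric3_zero_one_update_two {g : (Fin 3 → ℝ) → Matrix (Fin 3) (Fin 3) ℝ}
    (hg : IsKundtShape3 g) (hφ : HasShapeComponents φ C A B) (p : Fin 3 → ℝ) (t : ℝ) :
    pullbackMetric3 φ g (update p 2 t) 0 1 =
      deriv C (p 0) * deriv (A (p 0)) (p 1) *
          g (update (φ p) 2 (t / deriv C (p 0) + B (p 0) (p 1))) 0 1 +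
        (deriv C (p 0) * deriv (B (p 0)) (p 1) +
          deriv (fun u => A u (p 1)) (p 0) * g (φ p) 1 1 * deriv (A (p 0)) (p 1)) := by
  rw [hφ.pullbackMetric3_zero_one hg, hφ.apply_update_two, hg.xx_update_two,
    update_of_ne (by decide : (0 : Fin 3) ≠ 2), update_of_ne (by decide : (1 : Fin 3) ≠ 2)]
  ring

theorem d2v_pullbackMetric3_zero_one {g : (Fin 3 → ℝ) → Matrix (Fin 3) (Fin 3) ℝ}
    (hg : IsKundtShape3 g) (hφ : HasShapeComponents φ C A B) (p : Fin 3 → ℝ)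
    (hC : deriv C (p 0) ≠ 0) :
    d2v (fun q => pullbackMetric3 φ g q 0 1) p =
      deriv (A (p 0)) (p 1) / deriv C (p 0) * d2v (fun q => g q 0 1) (φ p) := by
  simp only [d2v, hφ.pullbackMetric3_zero_one_update_two hg,
    deriv_deriv_const_mul_comp_div_add_const (fun s => g (update (φ p) 2 s) 0 1),
    hφ.apply_two p]
  field_simp

end HasShapeComponents

/-- **Appendix.** `W_{vv} = ∂²_v g_{ux}` is a relative differential invariant of the
shape-preserving pseudogroup in dimension 3. -/
theorem Wvv_is_relative_invariant
    (g : (Fin 3 → ℝ) → Matrix (Fin 3) (Fin 3) ℝ)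
    (φ : (Fin 3 → ℝ) → Fin 3 → ℝ)
    (hg : IsKundtShape3 g) (hφ : IsShapeTransform3 φ) :
    ∃ lam : (Fin 3 → ℝ) → ℝ,
      ContDiff ℝ (⊤ : ℕ∞) lam ∧ (∀ p, lam p ≠ 0) ∧
      ∀ p : Fin 3 → ℝ,
        d2v (fun q => pullbackMetric3 φ g q 0 1) p =
          lam p * d2v (fun q => g q 0 1) (φ p) := by
  obtain ⟨C, A, B, hC, hA, -, hC', hA', hφ0, hφ1, hφ2⟩ := hφ
  have hAx : ContDiff ℝ (⊤ : ℕ∞) fun p : Fin 3 → ℝ => deriv (A (p 0)) (p 1) :=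
    ContDiff.deriv_of_uncurry (f := fun p : Fin 3 → ℝ => A (p 0))
      (hA.comp (((contDiff_apply ℝ ℝ (0 : Fin 3)).comp contDiff_fst).prodMk contDiff_snd))
      (contDiff_apply ℝ ℝ 1) (by simp)
  refine ⟨fun p => deriv (A (p 0)) (p 1) / deriv C (p 0), ?_, ?_, fun p => ?_⟩
  · exact hAx.div (hC.deriv'.comp (contDiff_apply ℝ ℝ (0 : Fin 3))) fun p => hC' (p 0)
  · exact fun p => div_ne_zero (hA' (p 0) (p 1)) (hC' (p 0))
  · exact HasShapeComponents.d2v_pullbackMetric3_zero_one hg ⟨hφ0, hφ1, hφ2⟩ p (hC' (p 0))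
end
end

section
/- Let n = 3 with coordinates (u, x, v) on ℝ³, let g be a smooth metric of Kundt shape whose (u,x)-entry satisfies ∂²_v g_{ux} ≡ 0 identically, and let φ be a shape transformation. Then the third v-derivative of the (u,u)-entry is a relative invariant on this locus: there exists a smooth nowhere-vanishing function μ : ℝ³ → ℝ such that ∂³_v (φ*g)_{uu}(p) = μ(p) · (∂³_v g_{uu})(φ(p)) for all p ∈ ℝ³ (Appendix: H_{vvv} is a relative differential invariant on the submanifold cut out by W_{vv} = 0). -/
open Matrix

noncomputable section

/-!
Along a `v`-line the shape transformation is affine in `v` with slope `1 / C'(u)`, and the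
`(u,u)`-entry of the pullback is `C'² g_uu + 2 C' A_u g_ux + A_u² g_xx + 2 C' ∂_u φ^v`, with the
metric entries evaluated on the image line. There `g_xx` is constant (`∂_v g_xx = 0`), `g_ux` is
affine (`W_vv = 0`) and `∂_u φ^v` is affine in `v`, so three `v`-derivatives kill everything but
the first term, which yields `C'² · C'⁻³ · H_vvv ∘ φ = C'⁻¹ · H_vvv ∘ φ`.
-/

open Function

section OneVariable

variable {𝕜 : Type*} [NontriviallyNormedField 𝕜]

theorem iteratedDeriv_const_mul_comp_affine {n : ℕ} {h : 𝕜 → 𝕜} (hh : ContDiff 𝕜 n h)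
    (K m b t : 𝕜) :
    iteratedDeriv n (fun t => K * h (m * t + b)) t = K * m ^ n * iteratedDeriv n h (m * t + b) := by
  rw [iteratedDeriv_const_mul_field,
    iteratedDeriv_comp_const_mul (f := fun s => h (s + b))
      (hh.comp (contDiff_id.add contDiff_const)),
    iteratedDeriv_comp_add_const, mul_assoc]

theorem iteratedDeriv_eq_zero_of_iterate_deriv_eq_zero {F : Type*} [NormedAddCommGroup F]
    [NormedSpace 𝕜 F] {f : 𝕜 → F} {k n : ℕ} (hkn : k ≤ n) (hf : deriv^[k] f = 0) :
    iteratedDeriv n f = 0 := by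
  obtain ⟨j, rfl⟩ := Nat.exists_eq_add_of_le hkn
  funext x
  rw [iteratedDeriv_eq_iterate, add_comm, iterate_add_apply, hf,
    ← iteratedDeriv_eq_iterate]
  exact iteratedDeriv_const_zero

theorem iteratedDeriv_const_mul_affine {n : ℕ} (hn : 2 ≤ n) (K m b t : 𝕜) :
    iteratedDeriv n (fun t => K * (m * t + b)) t = 0 := by
  rw [iteratedDeriv_const_mul_comp_affine (h := fun s => s) contDiff_id, iteratedDeriv_fun_id,
    if_neg (by omega), if_neg (by omega), mul_zero]

theorem iteratedDeriv_comp_affine_of_iteratedDeriv_eq_zero {n : ℕ} (hn : 2 ≤ n)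
    {h₀ h₁ h₂ : 𝕜 → 𝕜} (hh₀ : ContDiff 𝕜 n h₀) (hh₁ : ContDiff 𝕜 n h₁) (hh₂ : ContDiff 𝕜 n h₂)
    (h₁n : iteratedDeriv n h₁ = 0) (h₂n : iteratedDeriv n h₂ = 0) (K₀ K₁ K₂ K₃ m b α β t : 𝕜) :
    iteratedDeriv n (fun t => K₀ * h₀ (m * t + b) + K₁ * h₁ (m * t + b) + K₂ * h₂ (m * t + b)
      + K₃ * (α * t + β)) t = K₀ * m ^ n * iteratedDeriv n h₀ (m * t + b) := by
  rw [iteratedDeriv_fun_add (by fun_prop) (by fun_prop),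
    iteratedDeriv_fun_add (by fun_prop) (by fun_prop),
    iteratedDeriv_fun_add (by fun_prop) (by fun_prop),
    iteratedDeriv_const_mul_comp_affine hh₀, iteratedDeriv_const_mul_comp_affine hh₁,
    iteratedDeriv_const_mul_comp_affine hh₂, iteratedDeriv_const_mul_affine hn, h₁n, h₂n]
  simp

end OneVariable

theorem iterate_deriv_comp_update_eq_zero {f : (Fin 3 → ℝ) → ℝ} {k : ℕ}
    (hf : ∀ p, deriv^[k] (fun t => f (update p 2 t)) (p 2) = 0) (q : Fin 3 → ℝ) :
    deriv^[k] (fun t => f (update q 2 t)) = 0 :=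
  funext fun s => by simpa [update_idem] using hf (update q 2 s)

theorem Matrix.transpose_mul_mul_apply_zero_zero_of_kundt {G : Matrix (Fin 3) (Fin 3) ℝ}
    (hG : G.IsSymm) (h22 : G 2 2 = 0) (h12 : G 1 2 = 0) (h02 : G 0 2 = 1)
    (J : Matrix (Fin 3) (Fin 3) ℝ) :
    (Jᵀ * G * J) 0 0 =
      J 0 0 ^ 2 * G 0 0 + 2 * J 0 0 * J 1 0 * G 0 1 + J 1 0 ^ 2 * G 1 1 + 2 * J 0 0 * J 2 0 := by
  simp only [mul_apply, Fin.sum_univ_three, transpose_apply]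
  rw [hG.apply 0 1, hG.apply 0 2, hG.apply 1 2, h22, h12, h02]
  ring

section ShapeTransform

variable {φ : (Fin 3 → ℝ) → Fin 3 → ℝ} {C : ℝ → ℝ} {A B : ℝ → ℝ → ℝ}

theorem shapeTransform_apply_update_two (hφ0 : ∀ p, φ p 0 = C (p 0))
    (hφ1 : ∀ p, φ p 1 = A (p 0) (p 1))
    (hφ2 : ∀ p, φ p 2 = p 2 / deriv C (p 0) + B (p 0) (p 1)) (p : Fin 3 → ℝ) (t : ℝ) :
    φ (update p 2 t) = update (φ p) 2 ((deriv C (p 0))⁻¹ * t + B (p 0) (p 1)) := by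
  funext i
  fin_cases i <;> simp [hφ0, hφ1, hφ2, div_eq_inv_mul]

theorem jacobianMatrix3_zero_zero (hφ0 : ∀ p, φ p 0 = C (p 0)) (q : Fin 3 → ℝ) :
    jacobianMatrix3 φ q 0 0 = deriv C (q 0) := by
  simp [jacobianMatrix3, hφ0]

theorem jacobianMatrix3_one_zero (hφ1 : ∀ p, φ p 1 = A (p 0) (p 1)) (q : Fin 3 → ℝ) :
    jacobianMatrix3 φ q 1 0 = deriv (fun s => A s (q 1)) (q 0) := by
  simp [jacobianMatrix3, hφ1]

theorem jacobianMatrix3_two_zero (hφ2 : ∀ p, φ p 2 = p 2 / deriv C (p 0) + B (p 0) (p 1))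
    (q : Fin 3 → ℝ) (hC : DifferentiableAt ℝ (fun s => (deriv C s)⁻¹) (q 0))
    (hB : DifferentiableAt ℝ (fun s => B s (q 1)) (q 0)) :
    jacobianMatrix3 φ q 2 0 =
      deriv (fun s => (deriv C s)⁻¹) (q 0) * q 2 + deriv (fun s => B s (q 1)) (q 0) := by
  simp only [jacobianMatrix3, of_apply, hφ2, update_self, ne_eq, Fin.reduceEq, not_false_eq_true,
    update_of_ne, div_eq_inv_mul]
  rw [deriv_fun_add (hC.mul_const _) hB, deriv_mul_const hC]

end ShapeTransform

theorem d3v_eq_iteratedDeriv (f : (Fin 3 → ℝ) → ℝ) (p : Fin 3 → ℝ) :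
    d3v f p = iteratedDeriv 3 (fun t => f (update p 2 t)) (p 2) := by
  rw [iteratedDeriv_eq_iterate]
  rfl

theorem d3v_pullbackMetric3_zero_zero {g : (Fin 3 → ℝ) → Matrix (Fin 3) (Fin 3) ℝ}
    {φ : (Fin 3 → ℝ) → Fin 3 → ℝ} {C : ℝ → ℝ} {A B : ℝ → ℝ → ℝ} (hg : IsKundtShape3 g)
    (hWvv : ∀ p : Fin 3 → ℝ, d2v (fun q => g q 0 1) p = 0)
    (hφ0 : ∀ p, φ p 0 = C (p 0)) (hφ1 : ∀ p, φ p 1 = A (p 0) (p 1))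
    (hφ2 : ∀ p, φ p 2 = p 2 / deriv C (p 0) + B (p 0) (p 1)) (p : Fin 3 → ℝ)
    (hC : DifferentiableAt ℝ (fun s => (deriv C s)⁻¹) (p 0))
    (hB : DifferentiableAt ℝ (fun s => B s (p 1)) (p 0)) (hC0 : deriv C (p 0) ≠ 0) :
    d3v (fun q => pullbackMetric3 φ g q 0 0) p =
      (deriv C (p 0))⁻¹ * d3v (fun q => g q 0 0) (φ p) := by
  set c := deriv C (p 0)
  set a := deriv (fun s => A s (p 1)) (p 0)
  set α := deriv (fun s => (deriv C s)⁻¹) (p 0)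
  set β := deriv (fun s => B s (p 1)) (p 0)
  set b := B (p 0) (p 1)
  have hline (i j : Fin 3) : ContDiff ℝ 3 fun s => g (update (φ p) 2 s) i j :=
    ((hg.smooth i j).comp (contDiff_update _ (φ p) 2)).of_le (by norm_cast)
  have h01 : iteratedDeriv 3 (fun s => g (update (φ p) 2 s) 0 1) = 0 :=
    iteratedDeriv_eq_zero_of_iterate_deriv_eq_zero (by norm_num)
      (iterate_deriv_comp_update_eq_zero (k := 2) (f := fun q => g q 0 1) hWvv (φ p))
  have h11 : iteratedDeriv 3 (fun s => g (update (φ p) 2 s) 1 1) = 0 :=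
    iteratedDeriv_eq_zero_of_iterate_deriv_eq_zero (by norm_num)
      (iterate_deriv_comp_update_eq_zero (k := 1) (f := fun q => g q 1 1) hg.vIndep (φ p))
  have hF : (fun t => pullbackMetric3 φ g (update p 2 t) 0 0) = fun t =>
      c ^ 2 * g (update (φ p) 2 (c⁻¹ * t + b)) 0 0
        + 2 * c * a * g (update (φ p) 2 (c⁻¹ * t + b)) 0 1
        + a ^ 2 * g (update (φ p) 2 (c⁻¹ * t + b)) 1 1 + 2 * c * (α * t + β) := by
    funext t
    rw [pullbackMetric3, Matrix.transpose_mul_mul_apply_zero_zero_of_kundt (hg.symm _) (hg.vv _)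
      (hg.xv _) (hg.uv _), jacobianMatrix3_zero_zero hφ0, jacobianMatrix3_one_zero hφ1,
      jacobianMatrix3_two_zero hφ2 _ (by simpa using hC) (by simpa using hB),
      shapeTransform_apply_update_two hφ0 hφ1 hφ2]
    simp only [ne_eq, Fin.reduceEq, not_false_eq_true, update_of_ne, update_self]
    rfl
  have hφp : c⁻¹ * p 2 + b = φ p 2 := by rw [hφ2, div_eq_inv_mul]
  rw [d3v_eq_iteratedDeriv, d3v_eq_iteratedDeriv, hF,
    iteratedDeriv_comp_affine_of_iteratedDeriv_eq_zero (by norm_num) (hline 0 0) (hline 0 1)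
      (hline 1 1) h01 h11, hφp, show c ^ 2 * c⁻¹ ^ 3 = c⁻¹ by field_simp]

/-- **Appendix.** On the locus `W_{vv} = ∂²_v g_{ux} ≡ 0`, the function
`H_{vvv} = ∂³_v g_{uu}` is a relative differential invariant of the shape-preserving
pseudogroup in dimension 3. -/
theorem Hvvv_is_relative_invariant
    (g : (Fin 3 → ℝ) → Matrix (Fin 3) (Fin 3) ℝ)
    (φ : (Fin 3 → ℝ) → Fin 3 → ℝ)
    (hg : IsKundtShape3 g)
    (hWvv : ∀ p : Fin 3 → ℝ, d2v (fun q => g q 0 1) p = 0)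
    (hφ : IsShapeTransform3 φ) :
    ∃ mu : (Fin 3 → ℝ) → ℝ,
      ContDiff ℝ (⊤ : ℕ∞) mu ∧ (∀ p, mu p ≠ 0) ∧
      ∀ p : Fin 3 → ℝ,
        d3v (fun q => pullbackMetric3 φ g q 0 0) p =
          mu p * d3v (fun q => g q 0 0) (φ p) := by
  obtain ⟨C, A, B, hC, -, hB, hC0, -, hφ0, hφ1, hφ2⟩ := hφ
  have hCinv : ContDiff ℝ (⊤ : ℕ∞) fun u => (deriv C u)⁻¹ :=
    (contDiff_infty_iff_deriv.mp hC).2.inv hC0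
  refine ⟨fun p => (deriv C (p 0))⁻¹, hCinv.comp (contDiff_apply ℝ ℝ 0),
    fun p => inv_ne_zero (hC0 (p 0)), fun p => ?_⟩
  exact d3v_pullbackMetric3_zero_zero hg hWvv hφ0 hφ1 hφ2 p
    ((hCinv.differentiable (by simp)) _)
    ((hB.comp (contDiff_id.prodMk contDiff_const)).differentiable (by simp) _) (hC0 _)
end
end
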